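/- arXiv:2311.12370 — 2 statements merged into one kernel-verified Lean document; each statement's English description precedes it below -/
import Mathlib

section
/- For a positive integer m, define λ_m = (2π)^{-m/2} · m^{m/2} · e^{-m/2} · σ_m, where σ_m = 2π^{(m+1)/2}/Γ((m+1)/2) is the m-dimensional Hausdorff measure of the unit sphere S^m ⊂ ℝ^{m+1}. Then the sequence (λ_m)_{m ≥ 1} is strictly decreasing: λ_{m+1} < λ_m for every m ≥ 1. In particular the entropies of the self-shrinking cylinders S^m(√m) × ℝ^{n-m} are all distinct and strictly decreasing in m. -/
open Real Filter Topology

/-- The entropy `λ_m = (2π)^{-m/2} m^{m/2} e^{-m/2} σ_m` of the round sphere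
`S^m(√m)` (with `σ_m = 2π^{(m+1)/2}/Γ((m+1)/2)` the area of the unit `m`-sphere). -/
noncomputable def sphereEntropy (m : ℕ) : ℝ :=
  (2 * Real.pi) ^ (-(m : ℝ) / 2) * (m : ℝ) ^ ((m : ℝ) / 2) * Real.exp (-(m : ℝ) / 2) *
    (2 * Real.pi ^ (((m : ℝ) + 1) / 2) / Real.Gamma (((m : ℝ) + 1) / 2))

/-! Write `μ_m = λ_m²`. The Gamma factors cancel over two steps: `μ_{m+2} = ρ_m μ_m` with the
elementary ratio `ρ_m = (m+2)^{m+2} / (e² m^m (m+1)²)`. Consequently `q_m = μ_m / μ_{m+1}`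
satisfies `q_{m+2} = q_m ρ_m / ρ_{m+1}`, and `ρ_m < ρ_{m+1}` is, after taking logarithms, an
inequality between values of `log (1 + 1/x)` that the first two terms of its `artanh` series
already decide. Log-convexity of `Γ` gives `Γ(a + 1/2)² ~ a Γ(a)²`, whence `q_m → 1`. A sequence
that decreases along steps of two and tends to `1` stays above `1`, so `λ_{m+1} < λ_m`. -/

theorem le_log_one_add_inv {a : ℝ} (ha : 0 < a) :
    2 / (2 * a + 1) + 2 / (3 * (2 * a + 1) ^ 3) ≤ log (1 + a⁻¹) := by
  refine Eq.trans_le ?_ <|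
    sum_le_hasSum (Finset.range 2) (fun k _ => by positivity) (hasSum_log_one_add_inv ha)
  norm_num [Finset.sum_range_succ]
  field_simp

theorem log_one_add_inv_le {a : ℝ} (ha : 0 < a) :
    log (1 + a⁻¹) ≤ 2 / (2 * a + 1) + 1 / (6 * a * (a + 1) * (2 * a + 1)) := by
  have htail := (hasSum_nat_add_iff' 1).mpr (hasSum_log_one_add_inv ha)
  set t := 1 / (2 * a + 1) with ht
  have ht2 : t ^ 2 < 1 := by
    rw [ht, div_pow, one_pow, div_lt_one (by positivity)]; nlinarith
  have hgeom := (hasSum_geometric_of_lt_one (sq_nonneg t) ht2).mul_left (2 / 3 * t ^ 3)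
  have hterm (k : ℕ) : 2 * (1 / (2 * ((k + 1 : ℕ) : ℝ) + 1)) * t ^ (2 * (k + 1) + 1) ≤
      2 / 3 * t ^ 3 * (t ^ 2) ^ k := by
    calc 2 * (1 / (2 * ((k + 1 : ℕ) : ℝ) + 1)) * t ^ (2 * (k + 1) + 1)
        = 2 / (2 * (k + 1 : ℕ) + 1) * (t ^ 3 * (t ^ 2) ^ k) := by ring
      _ ≤ 2 / 3 * (t ^ 3 * (t ^ 2) ^ k) := by gcongr; push_cast; linarith
      _ = _ := by ring
  have hsum : 2 / 3 * t ^ 3 * (1 - t ^ 2)⁻¹ = 1 / (6 * a * (a + 1) * (2 * a + 1)) := by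
    have : 1 - t ^ 2 = 4 * a * (a + 1) / (2 * a + 1) ^ 2 := by
      rw [ht]; field_simp; ring
    rw [this, ht]; field_simp; ring
  have hle := hasSum_le hterm htail hgeom
  rw [hsum] at hle
  simp only [Finset.sum_range_one, Nat.cast_zero, mul_zero, zero_add, div_one, mul_one,
    pow_one] at hle
  linarith [show 2 * t = 2 / (2 * a + 1) by rw [ht]; ring]

theorem log_one_add_inv_add_mul_lt {x : ℝ} (hx : 0 < x) :
    log (1 + (x + 1)⁻¹) + x * log (1 + x⁻¹) < (x + 3) * log (1 + (x + 2)⁻¹) := by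
  have h₂ := mul_le_mul_of_nonneg_left (le_log_one_add_inv (a := x + 2) (by positivity))
    (by positivity : 0 ≤ x + 3)
  have h₁ := log_one_add_inv_le (a := x + 1) (by positivity)
  have h₀ := mul_le_mul_of_nonneg_left (log_one_add_inv_le hx) hx.le
  have hgap : 2 / (2 * (x + 1) + 1) + 1 / (6 * (x + 1) * (x + 1 + 1) * (2 * (x + 1) + 1)) +
      x * (2 / (2 * x + 1) + 1 / (6 * x * (x + 1) * (2 * x + 1))) <
      (x + 3) * (2 / (2 * (x + 2) + 1) + 2 / (3 * (2 * (x + 2) + 1) ^ 3)) := by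
    rw [← sub_pos]
    convert (by positivity : 0 < (128 * x ^ 4 + 1020 * x ^ 3 + 2964 * x ^ 2 + 3669 * x + 1597) /
      (6 * (2 * x + 5) ^ 3 * (2 * x + 3) * (2 * x + 1) * (x + 1) * (x + 2))) using 1
    field_simp
    ring
  linarith

theorem Gamma_midpoint_sq_le {s t : ℝ} (hs : 0 < s) (ht : 0 < t) :
    Gamma ((s + t) / 2) ^ 2 ≤ Gamma s * Gamma t := by
  have h := Gamma_mul_add_mul_le_rpow_Gamma_mul_rpow_Gamma hs ht (a := 1 / 2) (b := 1 / 2)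
    (by norm_num) (by norm_num) (by norm_num)
  rw [show 1 / 2 * s + 1 / 2 * t = (s + t) / 2 by ring] at h
  calc Gamma ((s + t) / 2) ^ 2 ≤ (Gamma s ^ (1 / 2 : ℝ) * Gamma t ^ (1 / 2 : ℝ)) ^ 2 := by
        gcongr
    _ = Gamma s * Gamma t := by
        rw [mul_pow, ← rpow_natCast, ← rpow_natCast, ← rpow_mul (Gamma_pos_of_pos hs).le,
          ← rpow_mul (Gamma_pos_of_pos ht).le]
        norm_num

theorem Gamma_add_half_sq_le {a : ℝ} (ha : 0 < a) : Gamma (a + 1 / 2) ^ 2 ≤ a * Gamma a ^ 2 := by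
  have h := Gamma_midpoint_sq_le ha (by positivity : 0 < a + 1)
  rwa [show (a + (a + 1)) / 2 = a + 1 / 2 by ring, Gamma_add_one ha.ne', mul_left_comm,
    ← sq] at h

theorem le_Gamma_add_half_sq {a : ℝ} (ha : 1 / 2 < a) :
    (a - 1 / 2) * Gamma a ^ 2 ≤ Gamma (a + 1 / 2) ^ 2 := by
  have h := Gamma_midpoint_sq_le (by linarith : 0 < a - 1 / 2) (by linarith : 0 < a + 1 / 2)
  have hrec : Gamma (a + 1 / 2) = (a - 1 / 2) * Gamma (a - 1 / 2) := by
    rw [← Gamma_add_one (by linarith)]; ring_nf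
  rw [show (a - 1 / 2 + (a + 1 / 2)) / 2 = a by ring] at h
  calc (a - 1 / 2) * Gamma a ^ 2 ≤ (a - 1 / 2) * (Gamma (a - 1 / 2) * Gamma (a + 1 / 2)) := by
        gcongr
    _ = Gamma (a + 1 / 2) ^ 2 := by rw [hrec]; ring

theorem tendsto_Gamma_add_half_sq_div :
    Tendsto (fun a => Gamma (a + 1 / 2) ^ 2 / (a * Gamma a ^ 2)) atTop (𝓝 1) := by
  have hlow : Tendsto (fun a : ℝ => 1 - (2 * a)⁻¹) atTop (𝓝 1) := by
    simpa using tendsto_const_nhds.sub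
      (tendsto_inv_atTop_zero.comp (tendsto_id.const_mul_atTop (two_pos : (0 : ℝ) < 2)))
  refine tendsto_of_tendsto_of_tendsto_of_le_of_le' hlow tendsto_const_nhds ?_ ?_
  · filter_upwards [eventually_gt_atTop (1 / 2)] with a ha
    have hpos : 0 < a * Gamma a ^ 2 := by
      have := Gamma_pos_of_pos (by linarith : 0 < a); positivity
    rw [le_div_iff₀ hpos]
    calc (1 - (2 * a)⁻¹) * (a * Gamma a ^ 2) = (a - 1 / 2) * Gamma a ^ 2 := by
          field_simp
      _ ≤ _ := le_Gamma_add_half_sq ha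
  · filter_upwards [eventually_gt_atTop 0] with a ha
    have hpos : 0 < a * Gamma a ^ 2 := by
      have := Gamma_pos_of_pos ha; positivity
    rw [div_le_one hpos]
    exact Gamma_add_half_sq_le ha

theorem rpow_div_two_sq {x : ℝ} (hx : 0 ≤ x) (y : ℝ) : (x ^ (y / 2)) ^ 2 = x ^ y := by
  rw [← rpow_natCast, ← rpow_mul hx]
  norm_num

theorem sphereEntropy_sq (m : ℕ) :
    sphereEntropy m ^ 2 =
      4 * π * (m : ℝ) ^ m / ((2 * exp 1) ^ m * Gamma (((m : ℝ) + 1) / 2) ^ 2) := by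
  have h2π : ((2 * π) ^ (-(m : ℝ) / 2)) ^ 2 = ((2 * π) ^ m)⁻¹ := by
    rw [rpow_div_two_sq (by positivity), rpow_neg (by positivity), rpow_natCast]
  have hm : ((m : ℝ) ^ ((m : ℝ) / 2)) ^ 2 = (m : ℝ) ^ m := by
    rw [rpow_div_two_sq m.cast_nonneg, rpow_natCast]
  have he : exp (-(m : ℝ) / 2) ^ 2 = (exp 1 ^ m)⁻¹ := by
    rw [← exp_nat_mul, ← exp_nat_mul, ← exp_neg]; ring_nf
  have hπ : (π ^ (((m : ℝ) + 1) / 2)) ^ 2 = π ^ (m + 1) := by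
    rw [rpow_div_two_sq pi_pos.le]; norm_cast
  simp only [sphereEntropy, mul_pow, div_pow, h2π, hm, he, hπ]
  field_simp
  ring

theorem sphereEntropy_pos (m : ℕ) : 0 < sphereEntropy m := by
  have hΓ := Gamma_pos_of_pos (by positivity : (0 : ℝ) < ((m : ℝ) + 1) / 2)
  rcases m.eq_zero_or_pos with rfl | hm
  · norm_num [sphereEntropy]
    positivity
  · unfold sphereEntropy
    positivity

noncomputable def twoStepRatio (m : ℕ) : ℝ :=
  ((m : ℝ) + 2) ^ (m + 2) / (exp 2 * (m : ℝ) ^ m * ((m : ℝ) + 1) ^ 2)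

theorem natCast_pow_self_pos (m : ℕ) : 0 < (m : ℝ) ^ m := by
  rcases m.eq_zero_or_pos with rfl | hm
  · simp
  · positivity

theorem twoStepRatio_pos (m : ℕ) : 0 < twoStepRatio m := by
  have := natCast_pow_self_pos m
  unfold twoStepRatio
  positivity

theorem sphereEntropy_sq_add_two (m : ℕ) :
    sphereEntropy (m + 2) ^ 2 = twoStepRatio m * sphereEntropy m ^ 2 := by
  have hΓ : Gamma ((((m + 2 : ℕ) : ℝ) + 1) / 2) =
      ((m : ℝ) + 1) / 2 * Gamma (((m : ℝ) + 1) / 2) := by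
    rw [← Gamma_add_one (by positivity)]; push_cast; ring_nf
  have hΓpos := Gamma_pos_of_pos (by positivity : (0 : ℝ) < ((m : ℝ) + 1) / 2)
  have hmm := natCast_pow_self_pos m
  have he : exp 2 = exp 1 ^ 2 := by rw [← exp_nat_mul]; norm_num
  rw [sphereEntropy_sq, sphereEntropy_sq, hΓ, twoStepRatio, he]
  push_cast
  field_simp
  ring

theorem log_twoStepRatio (m : ℕ) :
    log (twoStepRatio m) =
      (m + 2) * log (m + 2) - 2 - m * log m - 2 * log (m + 1) := by
  have := natCast_pow_self_pos m
  rw [twoStepRatio, log_div (by positivity) (by positivity),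
    log_mul (by positivity) (by positivity), log_mul (by positivity) (by positivity), log_exp]
  simp only [log_pow]
  push_cast
  ring

theorem twoStepRatio_lt_succ {m : ℕ} (hm : 0 < m) : twoStepRatio m < twoStepRatio (m + 1) := by
  have hlog (y : ℝ) (hy : 0 < y) : log (1 + y⁻¹) = log (y + 1) - log y := by
    rw [← log_div (by positivity) hy.ne']; congr 1; field_simp
  have key := log_one_add_inv_add_mul_lt (x := (m : ℝ)) (by positivity)
  rw [hlog _ (by positivity), hlog _ (by positivity), hlog _ (by positivity)] at key
  rw [← log_lt_log_iff (twoStepRatio_pos m) (twoStepRatio_pos (m + 1)), log_twoStepRatio,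
    log_twoStepRatio]
  push_cast
  ring_nf at key ⊢
  linarith

theorem tendsto_sphereEntropy_sq_div_succ :
    Tendsto (fun m : ℕ => sphereEntropy m ^ 2 / sphereEntropy (m + 1) ^ 2) atTop (𝓝 1) := by
  have hexp : Tendsto (fun m : ℕ => exp 1 / (1 + 1 / (m : ℝ)) ^ m) atTop (𝓝 1) := by
    simpa [Pi.div_def, exp_ne_zero] using
      (tendsto_const_nhds (x := exp 1)).div (tendsto_one_add_div_pow_exp 1) (exp_ne_zero 1)
  have hhalf : Tendsto (fun m : ℕ => ((m : ℝ) + 1) / 2) atTop atTop :=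
    (tendsto_natCast_atTop_atTop.atTop_add tendsto_const_nhds).atTop_div_const two_pos
  have hlim := hexp.mul (tendsto_Gamma_add_half_sq_div.comp hhalf)
  rw [one_mul] at hlim
  refine hlim.congr' ?_
  filter_upwards [eventually_gt_atTop 0] with m hm
  have hΓ := Gamma_pos_of_pos (by positivity : (0 : ℝ) < ((m : ℝ) + 1) / 2)
  have hm' : (0 : ℝ) < m := by exact_mod_cast hm
  rw [Function.comp_apply, sphereEntropy_sq, sphereEntropy_sq]
  rw [show (((m + 1 : ℕ) : ℝ) + 1) / 2 = ((m : ℝ) + 1) / 2 + 1 / 2 by push_cast; ring]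
  rw [one_add_div hm'.ne', div_pow]
  push_cast
  field_simp
  ring

theorem lt_of_tendsto_of_forall_add_lt {α : Type*} [Preorder α] [TopologicalSpace α]
    [OrderClosedTopology α] {f : ℕ → α} {c : α} {k N : ℕ}
    (hf : ∀ n, N ≤ n → f (n + k) < f n) (hc : Tendsto f atTop (𝓝 c)) {n : ℕ} (hn : N ≤ n) :
    c < f n := by
  have hanti : Antitone fun j => f (n + k + k * j) :=
    antitone_nat_of_succ_le fun j => by
      rw [mul_add_one, ← add_assoc]
      exact (hf _ (by omega)).le
  have hk : 0 < k := Nat.pos_of_ne_zero fun hk => by simpa [hk] using hf n hn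
  have hlim : Tendsto (fun j => f (n + k + k * j)) atTop (𝓝 c) :=
    hc.comp <| tendsto_atTop_mono
      (fun j => (Nat.le_mul_of_pos_left j hk).trans (Nat.le_add_left _ _)) tendsto_id
  simpa using (hanti.le_of_tendsto hlim 0).trans_lt (hf n hn)

theorem sphereEntropy_sq_div_succ_add_two_lt {m : ℕ} (hm : 0 < m) :
    sphereEntropy (m + 2) ^ 2 / sphereEntropy (m + 2 + 1) ^ 2 <
      sphereEntropy m ^ 2 / sphereEntropy (m + 1) ^ 2 := by
  rw [show m + 2 + 1 = m + 1 + 2 by ring, sphereEntropy_sq_add_two, sphereEntropy_sq_add_two,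
    mul_div_mul_comm]
  have hq : 0 < sphereEntropy m ^ 2 / sphereEntropy (m + 1) ^ 2 := by
    have := sphereEntropy_pos m; have := sphereEntropy_pos (m + 1); positivity
  exact mul_lt_of_lt_one_left hq <| (div_lt_one (twoStepRatio_pos _)).2 (twoStepRatio_lt_succ hm)

theorem sphereEntropy_succ_lt {m : ℕ} (hm : 0 < m) : sphereEntropy (m + 1) < sphereEntropy m := by
  have hq := lt_of_tendsto_of_forall_add_lt (fun n hn => sphereEntropy_sq_div_succ_add_two_lt hn)
    tendsto_sphereEntropy_sq_div_succ hm
  rw [one_lt_div (pow_pos (sphereEntropy_pos _) 2)] at hq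
  exact (pow_lt_pow_iff_left₀ (sphereEntropy_pos _).le (sphereEntropy_pos _).le two_ne_zero).1 hq

/-- Stone's monotonicity: the entropies `λ_m` of the self-shrinking spheres (hence of
the cylinders `S^m(√m) × ℝ^{n−m}`) form a strictly decreasing sequence in `m ≥ 1`;
in particular they are all distinct. -/
theorem sphereEntropy_strictAnti :
    (∀ m : ℕ, 1 ≤ m → sphereEntropy (m + 1) < sphereEntropy m) ∧
    ∀ m₁ m₂ : ℕ, 1 ≤ m₁ → m₁ < m₂ → sphereEntropy m₂ < sphereEntropy m₁ :=
  ⟨fun _ hm => sphereEntropy_succ_lt hm, fun _ _ h₁ h₁₂ =>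
    Nat.rel_of_forall_rel_succ_of_le_of_lt (· > ·) (fun _ hn => sphereEntropy_succ_lt hn) h₁ h₁₂⟩
end

section
/- For a positive integer m, define λ_m = (2π)^{-m/2} · m^{m/2} · e^{-m/2} · σ_m, where σ_m = 2π^{(m+1)/2}/Γ((m+1)/2) is the m-dimensional Hausdorff measure of the unit sphere S^m ⊂ ℝ^{m+1}. Then λ_m > √2 for every m ≥ 1, and λ_m → √2 as m → ∞. -/
/-!
Write `λ_m = F(m/2)` with `F(x) = 2√π x^x e^{-x} / Γ(x + 1/2)`. As `Γ(x + 3/2)` equals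
`(x + 1/2) Γ(x + 1/2)`, the inequality `F(x + 1) < F(x)` amounts to
`(x+1) log(x+1) - x log x - log(x + 1/2) < 1`, which the substitution `t = 1/(2x+1)` turns into
`(1+t) log(1+t) - (1-t) log(1-t) < 2t`; the difference of the two sides vanishes at `t = 0`
and has derivative `-log(1 - t²) > 0`. Hence `λ_{m+2} < λ_m`, and `λ_m > √2` follows from the
limit.
At integers and half-integers `Γ(x + 1/2)` is a factorial up to elementary factors (by
Legendre's duplication formula in the first case), so Stirling's formula gives `λ_m → √2` along
even and along odd `m`.
-/

open Real Filter

open Topology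

theorem hasDerivAt_two_mul_sub_mul_log_one_add_sub_mul_log_one_sub {t : ℝ} (ht : |t| < 1) :
    HasDerivAt (fun s => 2 * s - ((1 + s) * log (1 + s) - (1 - s) * log (1 - s)))
      (-log (1 - t ^ 2)) t := by
  obtain ⟨h₁, h₂⟩ := abs_lt.1 ht
  have hp : 1 + t ≠ 0 := by linarith
  have hm : 1 - t ≠ 0 := by linarith
  have hadd : HasDerivAt (fun s => 1 + s) 1 t := (hasDerivAt_id t).const_add 1
  have hsub : HasDerivAt (fun s => 1 - s) (-1) t := by simpa using (hasDerivAt_id t).const_sub 1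
  refine (((hasDerivAt_id t).const_mul 2).sub ((hadd.mul (hadd.log hp)).sub
    (hsub.mul (hsub.log hm)))).congr_deriv ?_
  rw [show 1 - t ^ 2 = (1 + t) * (1 - t) by ring, log_mul hp hm]
  field_simp
  ring

theorem mul_log_one_add_sub_mul_log_one_sub_lt {t : ℝ} (h₀ : 0 < t) (h₁ : t < 1) :
    (1 + t) * log (1 + t) - (1 - t) * log (1 - t) < 2 * t := by
  set g : ℝ → ℝ := fun s => 2 * s - ((1 + s) * log (1 + s) - (1 - s) * log (1 - s))
  have hg : ∀ s ∈ Set.Icc 0 t, HasDerivAt g (-log (1 - s ^ 2)) s := fun s hs =>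
    hasDerivAt_two_mul_sub_mul_log_one_add_sub_mul_log_one_sub
      (abs_lt.2 ⟨by linarith [hs.1], by linarith [hs.2]⟩)
  obtain ⟨c, ⟨hc₀, hct⟩, hc⟩ := exists_hasDerivAt_eq_slope g _ h₀
    (fun s hs => (hg s hs).continuousAt.continuousWithinAt)
    (fun s hs => hg s (Set.Ioo_subset_Icc_self hs))
  have hlog : log (1 - c ^ 2) < 0 := log_neg (by nlinarith) (by nlinarith)
  have : 0 < g t - g 0 := by
    rw [sub_zero, eq_div_iff h₀.ne'] at hc
    nlinarith
  simpa [g] using this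

theorem add_one_mul_log_add_one_lt {x : ℝ} (hx : 0 < x) :
    (x + 1) * log (x + 1) < x * log x + log (x + 1 / 2) + 1 := by
  have hx₂ : 0 < x + 1 / 2 := by linarith
  have key := mul_log_one_add_sub_mul_log_one_sub_lt (t := 1 / (2 * x + 1)) (by positivity)
    (by rw [div_lt_one (by linarith)]; linarith)
  rw [show 1 + 1 / (2 * x + 1) = (x + 1) / (x + 1 / 2) by field_simp; ring,
    show 1 - 1 / (2 * x + 1) = x / (x + 1 / 2) by field_simp; ring,
    log_div (by linarith) hx₂.ne', log_div hx.ne' hx₂.ne'] at key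
  -- so that `field_simp` leaves the argument of this logarithm alone
  set L := log (x + 1 / 2)
  field_simp at key
  linarith

noncomputable def halfDimEntropy (x : ℝ) : ℝ :=
  2 * √π * x ^ x * exp (-x) / Gamma (x + 1 / 2)

theorem sphereEntropy_eq_halfDimEntropy (m : ℕ) : sphereEntropy m = halfDimEntropy (m / 2) := by
  set x : ℝ := m / 2
  have hx : 0 ≤ x := by positivity
  rw [sphereEntropy, halfDimEntropy, show (m : ℝ) = 2 * x by ring,
    show -(2 * x) / 2 = -x by ring, show 2 * x / 2 = x by ring,
    show (2 * x + 1) / 2 = x + 1 / 2 by ring, mul_rpow zero_le_two pi_pos.le,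
    mul_rpow zero_le_two hx, rpow_add pi_pos, ← sqrt_eq_rpow, rpow_neg zero_le_two,
    rpow_neg pi_pos.le]
  have : (0 : ℝ) < π ^ x := by positivity
  have : (0 : ℝ) < 2 ^ x := by positivity
  field_simp

theorem halfDimEntropy_add_one_lt {x : ℝ} (hx : 0 < x) :
    halfDimEntropy (x + 1) < halfDimEntropy x := by
  have hx₂ : 0 < x + 1 / 2 := by linarith
  have hΓ : Gamma (x + 1 + 1 / 2) = (x + 1 / 2) * Gamma (x + 1 / 2) := by
    rw [add_right_comm, Gamma_add_one hx₂.ne']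
  have hpow : (x + 1) ^ (x + 1) * exp (-(x + 1)) < x ^ x * exp (-x) * (x + 1 / 2) := by
    rw [rpow_def_of_pos (by linarith), rpow_def_of_pos hx, ← exp_log hx₂, ← exp_add,
      ← exp_add, ← exp_add, exp_lt_exp]
    linarith [add_one_mul_log_add_one_lt hx]
  have : 0 < Gamma (x + 1 / 2) := Gamma_pos_of_pos hx₂
  rw [halfDimEntropy, halfDimEntropy, hΓ, div_lt_div_iff₀ (by positivity) this]
  have : 0 < 2 * √π * Gamma (x + 1 / 2) := by positivity
  nlinarith

theorem Gamma_nat_add_half_eq_factorial (k : ℕ) :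
    Gamma (k + 1 / 2) = (2 * k).factorial * √π / (4 ^ k * k.factorial) := by
  have h := Gamma_mul_Gamma_add_half (k + 1 / 2)
  rw [show (k : ℝ) + 1 / 2 + 1 / 2 = k + 1 by ring, Gamma_nat_eq_factorial,
    show 2 * ((k : ℝ) + 1 / 2) = (2 * k : ℕ) + 1 by push_cast; ring, Gamma_nat_eq_factorial,
    show (1 : ℝ) - ((2 * k : ℕ) + 1) = -(2 * k : ℕ) by ring, rpow_neg zero_le_two,
    rpow_natCast, pow_mul] at h
  rw [eq_div_iff (by positivity), mul_left_comm, h]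
  norm_num
  field_simp

theorem halfDimEntropy_natCast {k : ℕ} (hk : k ≠ 0) :
    halfDimEntropy k = √2 * (Stirling.stirlingSeq k / Stirling.stirlingSeq (2 * k)) := by
  have hk' : (0 : ℝ) < k := by positivity
  have hexp : exp (-k) = (exp 1 ^ k)⁻¹ := by rw [← exp_nat_mul, mul_one, exp_neg]
  have hsqrt : √(2 * (2 * k : ℕ)) = 2 * √k := by
    rw [show ((2 * (2 * k : ℕ)) : ℝ) = 2 ^ 2 * k by push_cast; ring, sqrt_mul' _ hk'.le,
      sqrt_sq zero_le_two]
  rw [halfDimEntropy, Gamma_nat_add_half_eq_factorial, rpow_natCast, Stirling.stirlingSeq,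
    Stirling.stirlingSeq, hexp, hsqrt, sqrt_mul' _ hk'.le, div_pow, div_pow]
  push_cast
  rw [show (4 : ℝ) ^ k = 2 ^ k * 2 ^ k by rw [← mul_pow]; norm_num]
  field_simp
  ring

theorem halfDimEntropy_natCast_add_half {k : ℕ} (hk : k ≠ 0) :
    halfDimEntropy (k + 1 / 2) = √2 * √π / Stirling.stirlingSeq k *
      ((1 + (1 / 2) / k) ^ k * exp (-(1 / 2)) * √(1 + (1 / 2) / k)) := by
  have hk' : (0 : ℝ) < k := by positivity
  have hk₂ : (0 : ℝ) < k + 1 / 2 := by positivity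
  have hone : 1 + (1 / 2) / (k : ℝ) = (k + 1 / 2) / k := by field_simp
  have hexp : exp (-(k + 1 / 2)) = (exp 1 ^ k)⁻¹ * exp (-(1 / 2)) := by
    rw [neg_add, exp_add, ← exp_nat_mul, mul_one, exp_neg]
  rw [halfDimEntropy, add_assoc, add_halves, Gamma_nat_eq_factorial, rpow_add hk₂, rpow_natCast,
    ← sqrt_eq_rpow, hexp, hone, sqrt_div' _ hk'.le, Stirling.stirlingSeq, sqrt_mul' _ hk'.le,
    div_pow, div_pow]
  field_simp
  rw [sq_sqrt zero_le_two]

theorem tendsto_halfDimEntropy_natCast :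
    Tendsto (fun k : ℕ => halfDimEntropy k) atTop (𝓝 √2) := by
  have hπ : √π ≠ 0 := by positivity
  have hS := Stirling.tendsto_stirlingSeq_sqrt_pi
  have hS₂ := hS.comp (tendsto_atTop_mono (fun k => show k ≤ 2 * k by omega) tendsto_id)
  have h := (hS.div hS₂ hπ).const_mul √2
  rw [div_self hπ, mul_one] at h
  exact h.congr' <| (eventually_ne_atTop 0).mono fun k hk => (halfDimEntropy_natCast hk).symm

theorem tendsto_halfDimEntropy_natCast_add_half :
    Tendsto (fun k : ℕ => halfDimEntropy (k + 1 / 2)) atTop (𝓝 √2) := by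
  have hπ : √π ≠ 0 := by positivity
  have hS : Tendsto (fun k => √2 * √π / Stirling.stirlingSeq k) atTop (𝓝 √2) := by
    simpa [mul_div_assoc, hπ] using
      ((tendsto_const_nhds (x := √π)).div Stirling.tendsto_stirlingSeq_sqrt_pi hπ).const_mul
        √2
  have hE : Tendsto (fun k : ℕ => (1 + (1 / 2) / k) ^ k * exp (-(1 / 2))) atTop (𝓝 1) := by
    simpa [← exp_add] using (tendsto_one_add_div_pow_exp (1 / 2)).mul_const (exp (-(1 / 2)))
  have hu : Tendsto (fun k : ℕ => √(1 + (1 / 2) / k)) atTop (𝓝 1) := by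
    simpa using ((tendsto_const_div_atTop_nhds_zero_nat (1 / 2 : ℝ)).const_add 1).sqrt
  simpa using (hS.mul (hE.mul hu)).congr' <| (eventually_ne_atTop 0).mono fun k hk =>
    (halfDimEntropy_natCast_add_half hk).symm

theorem tendsto_of_tendsto_even_of_tendsto_odd {α : Type*} {f : ℕ → α} {l : Filter α}
    (h₀ : Tendsto (fun k => f (2 * k)) atTop l)
    (h₁ : Tendsto (fun k => f (2 * k + 1)) atTop l) :
    Tendsto f atTop l := by
  intro s hs
  obtain ⟨N₀, hN₀⟩ := eventually_atTop.1 (h₀ hs)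
  obtain ⟨N₁, hN₁⟩ := eventually_atTop.1 (h₁ hs)
  refine eventually_atTop.2 ⟨2 * max N₀ N₁, fun n hn => ?_⟩
  obtain ⟨k, rfl | rfl⟩ := Nat.even_or_odd' n
  · exact hN₀ k (by omega)
  · exact hN₁ k (by omega)

theorem tendsto_sphereEntropy : Tendsto sphereEntropy atTop (𝓝 √2) := by
  refine tendsto_of_tendsto_even_of_tendsto_odd ?_ ?_
  · refine tendsto_halfDimEntropy_natCast.congr fun k => ?_
    rw [sphereEntropy_eq_halfDimEntropy]
    push_cast
    ring_nf
  · refine tendsto_halfDimEntropy_natCast_add_half.congr fun k => ?_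
    rw [sphereEntropy_eq_halfDimEntropy]
    push_cast
    ring_nf

theorem sphereEntropy_add_two_lt {m : ℕ} (hm : m ≠ 0) :
    sphereEntropy (m + 2) < sphereEntropy m := by
  rw [sphereEntropy_eq_halfDimEntropy, sphereEntropy_eq_halfDimEntropy,
    show ((m + 2 : ℕ) : ℝ) / 2 = m / 2 + 1 by push_cast; ring]
  exact halfDimEntropy_add_one_lt (by positivity)

/-- Stone's limit result: the sphere entropies satisfy `λ_m > √2` for all `m ≥ 1`,
and `λ_m → √2` as `m → ∞`. -/
theorem sphereEntropy_gt_sqrt_two_and_tendsto_sqrt_two :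
    (∀ m : ℕ, 1 ≤ m → Real.sqrt 2 < sphereEntropy m) ∧
    Tendsto (fun m : ℕ => sphereEntropy m) atTop (nhds (Real.sqrt 2)) := by
  refine ⟨fun m hm => ?_, tendsto_sphereEntropy⟩
  have hanti : Antitone fun k => sphereEntropy (m + 2 + 2 * k) :=
    antitone_nat_of_succ_le fun k => by
      rw [show m + 2 + 2 * (k + 1) = m + 2 + 2 * k + 2 by ring]
      exact (sphereEntropy_add_two_lt (by omega)).le
  have hlim : Tendsto (fun k => sphereEntropy (m + 2 + 2 * k)) atTop (𝓝 √2) :=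
    tendsto_sphereEntropy.comp <|
      tendsto_atTop_mono (fun k => show k ≤ m + 2 + 2 * k by omega) tendsto_id
  calc √2 ≤ sphereEntropy (m + 2) := hanti.le_of_tendsto hlim 0
    _ < sphereEntropy m := sphereEntropy_add_two_lt (by omega)
end
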